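/- arXiv:2110.11531 — 2 statements merged into one kernel-verified Lean document; each statement's English description precedes it below -/
import Mathlib

section
/- Let 0 < θ ≤ 1 and λ > 0. Then for every s > λ^{1/θ}, the function t ↦ E_θ(−λ t^θ) is integrable against e^{−st} on (0,∞) and its Laplace transform is ∫_0^∞ e^{−st} E_θ(−λ t^θ) dt = s^{θ−1}/(s^θ + λ). -/
open MeasureTheory

/-- The (one-parameter) Mittag-Leffler function `E_θ(z) = Σ_{ℓ=0}^∞ z^ℓ / Γ(θℓ + 1)`. -/
noncomputable def mittagLeffler (θ z : ℝ) : ℝ :=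
  ∑' ℓ : ℕ, z ^ ℓ / Real.Gamma (θ * ℓ + 1)

open Filter Set Real

/-!
Expand `E_θ(c t^θ)` termwise. Against `e^{-st}` the `ℓ`-th term `(c t^θ)^ℓ / Γ(θℓ+1)` integrates
to `(c / s^θ)^ℓ / s`, since `∫_0^∞ t^{θℓ} e^{-st} dt = Γ(θℓ+1) / s^{θℓ+1}` cancels the Gamma
factor. The integrals of the absolute values form the geometric series `Σ (|c| / s^θ)^ℓ / s`,
finite when `|c| < s^θ` (for `c = -λ`: when `s > λ^{1/θ}`); this licenses exchanging sum and
integral, and `Σ (c / s^θ)^ℓ / s = s^{θ-1} / (s^θ - c)`. Convergence of the series defining `E_θ`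
is never needed, because `e^{-st} * ∑' ℓ, a ℓ = ∑' ℓ, e^{-st} * a ℓ` holds without summability.
-/

namespace MeasureTheory

theorem integrable_tsum_of_summable_integral_norm {α E : Type*} [MeasurableSpace α]
    {μ : Measure α} [NormedAddCommGroup E] [CompleteSpace E] {F : ℕ → α → E}
    (hF_int : ∀ n, Integrable (F n) μ) (hF_sum : Summable fun n ↦ ∫ a, ‖F n a‖ ∂μ) :
    Integrable (fun a ↦ ∑' n, F n a) μ := by
  have h_lintegral : ∑' n, ∫⁻ a, ‖F n a‖ₑ ∂μ ≠ ⊤ := by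
    simp_rw [← ofReal_integral_norm_eq_lintegral_enorm (hF_int _),
      ← ENNReal.ofReal_tsum_of_nonneg (fun n ↦ integral_nonneg fun a ↦ norm_nonneg (F n a)) hF_sum]
    exact ENNReal.ofReal_ne_top
  have h_summable : ∀ᵐ a ∂μ, Summable fun n ↦ ‖F n a‖ :=
    summable_norm_of_tsum_eLpNorm_ne_top le_rfl (fun n ↦ (hF_int n).aestronglyMeasurable)
      (by simpa only [eLpNorm_one_eq_lintegral_enorm] using h_lintegral)
  have h_partial (n : ℕ) : AEStronglyMeasurable (∑ i ∈ Finset.range n, F i) μ :=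
    Finset.aestronglyMeasurable_sum _ fun i _ ↦ (hF_int i).aestronglyMeasurable
  refine ⟨aestronglyMeasurable_of_tendsto_ae atTop h_partial ?_, ?_⟩
  · filter_upwards [h_summable] with a ha
    simpa only [Finset.sum_apply] using ha.of_norm.hasSum.tendsto_sum_nat
  · calc ∫⁻ a, ‖∑' n, F n a‖ₑ ∂μ ≤ ∫⁻ a, ∑' n, ‖F n a‖ₑ ∂μ :=
          lintegral_mono fun a ↦ enorm_tsum_le_tsum_enorm
      _ = ∑' n, ∫⁻ a, ‖F n a‖ₑ ∂μ := lintegral_tsum fun n ↦ (hF_int n).aestronglyMeasurable.enorm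
      _ < ⊤ := h_lintegral.lt_top

end MeasureTheory

noncomputable def mittagLefflerTerm (θ z : ℝ) (ℓ : ℕ) : ℝ :=
  z ^ ℓ / Gamma (θ * ℓ + 1)

section Laplace

variable {θ s : ℝ}

theorem Gamma_mul_natCast_add_one_pos (hθ : 0 ≤ θ) (ℓ : ℕ) : 0 < Gamma (θ * ℓ + 1) :=
  Gamma_pos_of_pos (by positivity)

theorem norm_mittagLefflerTerm (hθ : 0 ≤ θ) (z : ℝ) (ℓ : ℕ) :
    ‖mittagLefflerTerm θ z ℓ‖ = mittagLefflerTerm θ |z| ℓ := by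
  rw [mittagLefflerTerm, mittagLefflerTerm, norm_div, norm_pow, Real.norm_eq_abs,
    Real.norm_of_nonneg (Gamma_mul_natCast_add_one_pos hθ ℓ).le]

theorem exp_neg_mul_mul_mittagLefflerTerm_eq {t : ℝ} (ht : 0 < t) (c : ℝ) (ℓ : ℕ) :
    exp (-(s * t)) * mittagLefflerTerm θ (c * t ^ θ) ℓ =
      c ^ ℓ / Gamma (θ * ℓ + 1) * (t ^ (θ * ℓ + 1 - 1) * exp (-(s * t))) := by
  rw [mittagLefflerTerm, add_sub_cancel_right, rpow_mul ht.le, rpow_natCast]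
  ring

theorem integral_exp_neg_mul_mul_mittagLefflerTerm (hθ : 0 ≤ θ) (hs : 0 < s) (c : ℝ) (ℓ : ℕ) :
    ∫ t in Ioi 0, exp (-(s * t)) * mittagLefflerTerm θ (c * t ^ θ) ℓ = (c / s ^ θ) ^ ℓ / s := by
  rw [setIntegral_congr_fun measurableSet_Ioi
      fun t ht ↦ exp_neg_mul_mul_mittagLefflerTerm_eq ht c ℓ,
    integral_const_mul, integral_rpow_mul_exp_neg_mul_Ioi (by positivity) hs,
    rpow_add_one (one_div_pos.2 hs).ne', rpow_mul (one_div_pos.2 hs).le, rpow_natCast,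
    one_div, inv_rpow hs.le]
  have hΓ := (Gamma_mul_natCast_add_one_pos hθ ℓ).ne'
  field_simp
  ring

theorem integrableOn_exp_neg_mul_mul_mittagLefflerTerm (hθ : 0 ≤ θ) (hs : 0 < s) (c : ℝ)
    (ℓ : ℕ) :
    IntegrableOn (fun t ↦ exp (-(s * t)) * mittagLefflerTerm θ (c * t ^ θ) ℓ) (Ioi 0) := by
  have h_gamma : IntegrableOn (fun t ↦ t ^ (θ * ℓ + 1 - 1) * exp (-(s * t))) (Ioi 0) :=
    .of_integral_ne_zero <| by
      rw [integral_rpow_mul_exp_neg_mul_Ioi (by positivity) hs]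
      exact (mul_pos (by positivity) (Gamma_mul_natCast_add_one_pos hθ ℓ)).ne'
  exact IntegrableOn.congr_fun (h_gamma.const_mul _)
    (fun t ht ↦ (exp_neg_mul_mul_mittagLefflerTerm_eq ht c ℓ).symm) measurableSet_Ioi

theorem integral_norm_exp_neg_mul_mul_mittagLefflerTerm (hθ : 0 ≤ θ) (hs : 0 < s) (c : ℝ) (ℓ : ℕ) :
    ∫ t in Ioi 0, ‖exp (-(s * t)) * mittagLefflerTerm θ (c * t ^ θ) ℓ‖ = (|c| / s ^ θ) ^ ℓ / s := by
  rw [← integral_exp_neg_mul_mul_mittagLefflerTerm hθ hs |c| ℓ]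
  refine setIntegral_congr_fun measurableSet_Ioi fun t ht ↦ ?_
  rw [norm_mul, norm_mittagLefflerTerm hθ, Real.norm_of_nonneg (exp_pos _).le, abs_mul,
    abs_of_nonneg (rpow_nonneg (le_of_lt ht) θ)]

theorem integrableOn_and_integral_exp_neg_mul_mittagLeffler_mul_rpow (hθ : 0 ≤ θ) (hs : 0 < s)
    {c : ℝ} (hc : |c| < s ^ θ) :
    IntegrableOn (fun t ↦ exp (-(s * t)) * mittagLeffler θ (c * t ^ θ)) (Ioi 0) ∧
      ∫ t in Ioi 0, exp (-(s * t)) * mittagLeffler θ (c * t ^ θ) = s ^ (θ - 1) / (s ^ θ - c) := by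
  have hsθ : 0 < s ^ θ := (abs_nonneg c).trans_lt hc
  have h_ratio : |c / s ^ θ| < 1 := by rwa [abs_div, abs_of_pos hsθ, div_lt_one hsθ]
  have h_int := integrableOn_exp_neg_mul_mul_mittagLefflerTerm hθ hs c
  have h_sum : Summable fun ℓ ↦
      ∫ t in Ioi 0, ‖exp (-(s * t)) * mittagLefflerTerm θ (c * t ^ θ) ℓ‖ := by
    simp_rw [integral_norm_exp_neg_mul_mul_mittagLefflerTerm hθ hs]
    refine (summable_geometric_of_lt_one (by positivity) ?_).div_const s
    rwa [abs_div, abs_of_pos hsθ] at h_ratio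
  have h_tsum : (fun t ↦ exp (-(s * t)) * mittagLeffler θ (c * t ^ θ)) =
      fun t ↦ ∑' ℓ, exp (-(s * t)) * mittagLefflerTerm θ (c * t ^ θ) ℓ :=
    funext fun t ↦ tsum_mul_left.symm
  rw [h_tsum]
  refine ⟨integrable_tsum_of_summable_integral_norm h_int h_sum, ?_⟩
  rw [← integral_tsum_of_summable_integral_norm h_int h_sum]
  simp_rw [integral_exp_neg_mul_mul_mittagLefflerTerm hθ hs]
  rw [tsum_div_const, tsum_geometric_of_abs_lt_one h_ratio, rpow_sub_one hs.ne']
  field_simp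

end Laplace

theorem laplace_mittagLeffler_general (θ lam : ℝ) (hθ0 : 0 < θ) (hlam : 0 < lam)
    (s : ℝ) (hs : lam ^ (1 / θ) < s) :
    IntegrableOn (fun t : ℝ => Real.exp (-(s * t)) * mittagLeffler θ (-(lam * t ^ θ)))
      (Set.Ioi 0) ∧
    (∫ t in Set.Ioi (0 : ℝ), Real.exp (-(s * t)) * mittagLeffler θ (-(lam * t ^ θ))) =
      s ^ (θ - 1) / (s ^ θ + lam) := by
  have hs_pos : 0 < s := (rpow_pos_of_pos hlam _).trans hs
  have hlam_lt : lam < s ^ θ :=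
    calc lam = (lam ^ (1 / θ)) ^ θ := by
          rw [← rpow_mul hlam.le, one_div_mul_cancel hθ0.ne', rpow_one]
      _ < s ^ θ := rpow_lt_rpow (by positivity) hs hθ0
  have hc : |-lam| < s ^ θ := by rwa [abs_neg, abs_of_pos hlam]
  simpa only [neg_mul, sub_neg_eq_add] using
    integrableOn_and_integral_exp_neg_mul_mittagLeffler_mul_rpow hθ0.le hs_pos hc

/-- For `0 < θ ≤ 1`, `λ > 0` and `s > λ^{1/θ}`, the function `t ↦ E_θ(−λ t^θ)` is
Laplace-integrable and `∫_0^∞ e^{−st} E_θ(−λ t^θ) dt = s^{θ−1}/(s^θ + λ)`. -/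
theorem laplace_mittagLeffler (θ lam : ℝ) (hθ0 : 0 < θ) (hθ1 : θ ≤ 1) (hlam : 0 < lam)
    (s : ℝ) (hs : lam ^ (1 / θ) < s) :
    IntegrableOn (fun t : ℝ => Real.exp (-(s * t)) * mittagLeffler θ (-(lam * t ^ θ)))
      (Set.Ioi 0) ∧
    (∫ t in Set.Ioi (0 : ℝ), Real.exp (-(s * t)) * mittagLeffler θ (-(lam * t ^ θ))) =
      s ^ (θ - 1) / (s ^ θ + lam) :=
  laplace_mittagLeffler_general θ lam hθ0 hlam s hs
end

section
/- Let ψ, φ : ℝ → ℝ be nonnegative integrable probability densities with ∫ψ = ∫φ = 1 and ψ(t) = 0 for t < 0, and define the survival probability Ψ(t) = 1 − ∫_0^t ψ(r) dr. Let u₀ : ℝ → ℝ be integrable, and let u : ℝ × [0,∞) → ℝ be measurable such that for every s > 0 the function (x,t) ↦ e^{−st}|u(x,t)| is integrable on ℝ × (0,∞), and suppose u satisfies the CTRW master equation u(x,t) = Ψ(t) u₀(x) + ∫_0^t ψ(t−τ) ∫_ℝ φ(y) u(x−y, τ) dy dτ for almost every (x,t). Then the Fourier–Laplace transform Û(ξ,s)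 = ∫_0^∞ ∫_ℝ e^{−st} e^{−iξx} u(x,t) dx dt satisfies the Montroll–Weiss equation: for all s > 0 and ξ ∈ ℝ, Û(ξ,s) · (1 − 𝓛[ψ](s) · 𝓕[φ](ξ)) = ((1 − 𝓛[ψ](s))/s) · 𝓕[u₀](ξ). -/
/-!
The weights `e^{-st}` and `e^{-iξx}` of the Fourier–Laplace transform are multiplicative, so a
measure-preserving shear of the product space together with Fubini turns the transform of a
convolution into the product of the transforms: in space for `φ * u(·, t)`, and in time, on the
half-line, for the memory term `∫_0^t ψ(t - τ) (…) dτ`. Writing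
`Ψ(t) u₀(x) = u₀(x) - ∫_0^t ψ(t - τ) u₀(x) dτ`, the initial-datum term is a causal convolution
too, and transforming the master equation gives `Û = 𝓕u₀/s - 𝓛ψ 𝓕u₀/s + 𝓛ψ 𝓕φ Û`.
-/

open MeasureTheory intervalIntegral Set Real

local notation "μ₊" => Measure.restrict (volume : Measure ℝ) (Ioi (0 : ℝ))

namespace MontrollWeiss

theorem integrable_and_integral_of_comp_eq_mul {α β γ : Type*} [MeasurableSpace α]
    [MeasurableSpace β] [MeasurableSpace γ] {μ : Measure α} [SFinite μ] {ν : Measure β} [SFinite ν]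
    {κ : Measure γ} {T : α × β ≃ᵐ γ} (hT : MeasurePreserving T (μ.prod ν) κ)
    {F : γ → ℂ} {a : α → ℂ} {b : β → ℂ} (ha : Integrable a μ) (hb : Integrable b ν)
    (hF : ∀ q, F (T q) = a q.1 * b q.2) :
    Integrable F κ ∧ ∫ z, F z ∂κ = (∫ x, a x ∂μ) * ∫ y, b y ∂ν := by
  have hFT : F ∘ T = fun q => a q.1 * b q.2 := funext hF
  refine ⟨(hT.integrable_comp_emb T.measurableEmbedding).mp (hFT ▸ ha.mul_prod hb), ?_⟩
  rw [← hT.integral_comp' F, ← integral_prod_mul]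
  exact integral_congr_ae (.of_forall hF)

def spaceShear (T : Type*) [MeasurableSpace T] : ℝ × (ℝ × T) ≃ᵐ (ℝ × T) × ℝ :=
  MeasurableEquiv.prodAssoc.symm.trans <|
    ((MeasurableEquiv.shearAddRight ℝ).prodCongr (.refl T)).trans <|
      MeasurableEquiv.prodAssoc.trans MeasurableEquiv.prodComm

@[simp] theorem spaceShear_apply {T : Type*} [MeasurableSpace T] (q : ℝ × (ℝ × T)) :
    spaceShear T q = ((q.1 + q.2.1, q.2.2), q.1) := rfl

theorem measurePreserving_spaceShear {T : Type*} [MeasurableSpace T] (ν : Measure T)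
    [SFinite ν] :
    MeasurePreserving (spaceShear T) ((volume : Measure ℝ).prod (volume.prod ν))
      ((volume.prod ν).prod volume) :=
  (measurePreserving_prodAssoc volume volume ν).symm MeasurableEquiv.prodAssoc |>.trans <|
    ((measurePreserving_prod_add volume volume).prod (.id ν)).trans <|
      (measurePreserving_prodAssoc volume volume ν).trans Measure.measurePreserving_swap

theorem prod_restrict_Ioi {X : Type*} [MeasurableSpace X] (ν : Measure X) [SFinite ν] :
    ν.prod μ₊ = (ν.prod volume).restrict (univ ×ˢ Ioi 0) := by
  rw [← Measure.prod_restrict, Measure.restrict_univ]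

def timeShear (X : Type*) [MeasurableSpace X] : (X × ℝ) × ℝ ≃ᵐ (X × ℝ) × ℝ :=
  MeasurableEquiv.prodAssoc.trans <|
    ((MeasurableEquiv.refl X).prodCongr
      ((MeasurableEquiv.shearAddRight ℝ).trans MeasurableEquiv.prodComm)).trans
      MeasurableEquiv.prodAssoc.symm

@[simp] theorem timeShear_apply {X : Type*} [MeasurableSpace X] (q : (X × ℝ) × ℝ) :
    timeShear X q = ((q.1.1, q.1.2 + q.2), q.1.2) := rfl

theorem measurePreserving_timeShear {X : Type*} [MeasurableSpace X] (ν : Measure X)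
    [SFinite ν] :
    MeasurePreserving (timeShear X) ((ν.prod μ₊).prod volume) ((ν.prod volume).prod μ₊) :=
  (measurePreserving_prodAssoc ν μ₊ volume).trans <|
    ((MeasurePreserving.id ν).prod
      ((measurePreserving_prod_add μ₊ volume).trans Measure.measurePreserving_swap)).trans <|
      (measurePreserving_prodAssoc ν volume μ₊).symm MeasurableEquiv.prodAssoc

theorem integrable_and_integral_mul_conv {T : Type*} [MeasurableSpace T] {ν : Measure T} [SFinite ν]
    {χ : ℝ → ℂ} (hχ : ∀ a b, χ (a + b) = χ a * χ b) {φ : ℝ → ℂ} {V : ℝ → T → ℂ}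
    (hφ : Integrable (fun y => χ y * φ y))
    (hV : Integrable (fun p : ℝ × T => χ p.1 * V p.1 p.2) (volume.prod ν)) :
    Integrable (fun p : ℝ × T => χ p.1 * ∫ y, φ y * V (p.1 - y) p.2) (volume.prod ν) ∧
      ∫ p, χ p.1 * (∫ y, φ y * V (p.1 - y) p.2) ∂(volume.prod ν) =
        (∫ y, χ y * φ y) * ∫ p, χ p.1 * V p.1 p.2 ∂(volume.prod ν) := by
  obtain ⟨hint, hintegral⟩ := integrable_and_integral_of_comp_eq_mul
    (measurePreserving_spaceShear ν) (F := fun q => χ q.1.1 * (φ q.2 * V (q.1.1 - q.2) q.1.2))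
    hφ hV fun q => by simp only [spaceShear_apply, add_sub_cancel_left, hχ]; ring
  have hslice : ∀ p : ℝ × T, ∫ y, χ p.1 * (φ y * V (p.1 - y) p.2) =
      χ p.1 * ∫ y, φ y * V (p.1 - y) p.2 := fun p => integral_const_mul _ _
  simp_rw [← hslice]
  exact ⟨hint.integral_prod_left, (integral_prod _ hint).symm.trans hintegral⟩

theorem integrable_and_integral_mul_intervalConv {X : Type*} [MeasurableSpace X] {ν : Measure X}
    [SFinite ν]
    {w : ℝ → ℂ} (hw : ∀ a b, w (a + b) = w a * w b) {f : ℝ → ℂ} {G : X → ℝ → ℂ}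
    (hf : IntegrableOn (fun r => w r * f r) (Ioi 0))
    (hG : Integrable (fun p : X × ℝ => w p.2 * G p.1 p.2) (ν.prod μ₊)) :
    Integrable (fun p : X × ℝ => w p.2 * ∫ τ in 0..p.2, f (p.2 - τ) * G p.1 τ) (ν.prod μ₊) ∧
      ∫ p, w p.2 * (∫ τ in 0..p.2, f (p.2 - τ) * G p.1 τ) ∂(ν.prod μ₊) =
        (∫ r in Ioi 0, w r * f r) * ∫ p, w p.2 * G p.1 p.2 ∂(ν.prod μ₊) := by
  -- extending `f` by zero on `(-∞, 0]` encodes the cut-off `τ < t`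
  obtain ⟨hint, hintegral⟩ := integrable_and_integral_of_comp_eq_mul
    (measurePreserving_timeShear ν)
    (F := fun q => w q.1.2 * ((Ioi 0).indicator f (q.1.2 - q.2) * G q.1.1 q.2))
    hG ((integrable_indicator_iff measurableSet_Ioi).mpr hf) fun q => by
      by_cases hr : 0 < q.2
      · simp only [timeShear_apply, hw, add_sub_cancel_left, indicator_of_mem (mem_Ioi.mpr hr)]
        ring
      · simp [hr]
  have hslice : ∀ p : X × ℝ, ∫ τ, w p.2 * ((Ioi 0).indicator f (p.2 - τ) * G p.1 τ) ∂μ₊ =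
      (univ ×ˢ Ioi 0).indicator (fun p => w p.2 * ∫ τ in 0..p.2, f (p.2 - τ) * G p.1 τ) p := by
    rintro ⟨x, t⟩
    rw [MeasureTheory.integral_const_mul]
    by_cases ht : 0 < t
    · have hcut : ∀ τ, (Ioi 0).indicator f (t - τ) * G x τ =
          (Iio t).indicator (fun τ => f (t - τ) * G x τ) τ := by
        intro τ
        by_cases hτ : τ < t <;> simp [hτ, sub_pos]
      rw [indicator_of_mem (by simpa using ht), funext hcut,
        MeasureTheory.integral_indicator measurableSet_Iio,
        Measure.restrict_restrict measurableSet_Iio, Iio_inter_Ioi,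
        ← integral_Ioc_eq_integral_Ioo, integral_of_le ht.le]
    · rw [indicator_of_notMem (by simpa using ht), setIntegral_eq_zero_of_forall_eq_zero,
        mul_zero]
      intro τ hτ
      rw [indicator_of_notMem (by simp only [mem_Ioi, not_lt] at ht hτ ⊢; linarith), zero_mul]
  have hρ := prod_restrict_Ioi ν
  have hmeas : MeasurableSet (univ ×ˢ Ioi (0 : ℝ) : Set (X × ℝ)) :=
    MeasurableSet.univ.prod measurableSet_Ioi
  have h := hint.integral_prod_left
  simp_rw [hslice] at h
  refine ⟨hρ ▸ (integrable_indicator_iff hmeas).mp h, ?_⟩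
  rw [hρ, ← MeasureTheory.integral_indicator hmeas, ← funext hslice, ← integral_prod _ hint,
    hintegral, ← hρ, mul_comm, MeasureTheory.integral_indicator measurableSet_Ioi]

variable {s ξ : ℝ}

theorem ofReal_exp_neg_mul_add (a b : ℝ) :
    ((rexp (-(s * (a + b))) : ℝ) : ℂ) = rexp (-(s * a)) * rexp (-(s * b)) := by
  rw [← Complex.ofReal_mul, ← Real.exp_add]; ring_nf

theorem cexp_neg_I_mul_add (a b : ℝ) :
    Complex.exp (-(Complex.I * ξ * ((a + b : ℝ) : ℂ))) =
      Complex.exp (-(Complex.I * ξ * a)) * Complex.exp (-(Complex.I * ξ * b)) := by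
  rw [← Complex.exp_add]; push_cast; ring_nf

theorem norm_cexp_neg_I_mul (x : ℝ) : ‖Complex.exp (-(Complex.I * ξ * x))‖ = 1 := by
  simp [Complex.norm_exp]

theorem integrable_cexp_neg_I_mul {f : ℝ → ℂ} (hf : Integrable f) :
    Integrable (fun x : ℝ => Complex.exp (-(Complex.I * ξ * x)) * f x) :=
  hf.bdd_mul (by fun_prop) (.of_forall fun x => (norm_cexp_neg_I_mul x).le)

theorem integrableOn_exp_neg_mul_Ioi (hs : 0 ≤ s) {f : ℝ → ℂ} (hf : IntegrableOn f (Ioi 0)) :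
    IntegrableOn (fun t : ℝ => ((rexp (-(s * t)) : ℝ) : ℂ) * f t) (Ioi 0) := by
  refine hf.bdd_mul (by fun_prop) ?_ (c := 1)
  filter_upwards [ae_restrict_mem measurableSet_Ioi] with t ht
  rw [Complex.norm_real, Real.norm_of_nonneg (Real.exp_nonneg _), Real.exp_le_one_iff, neg_nonpos]
  exact mul_nonneg hs (le_of_lt ht)

theorem integral_ofReal_exp_neg_mul_Ioi (hs : 0 < s) :
    ∫ t in Ioi (0 : ℝ), ((rexp (-(s * t)) : ℝ) : ℂ) = 1 / s := by
  rw [integral_complex_ofReal]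
  simp_rw [← neg_mul]
  rw [integral_exp_mul_Ioi (neg_lt_zero.mpr hs), mul_zero, exp_zero]
  push_cast
  ring

theorem ofReal_mul_survival_add_intervalConv (ψ G : ℝ → ℝ) (t v₀ : ℝ) (a : ℂ) :
    a * (((1 - ∫ r in 0..t, ψ r) * v₀ + ∫ τ in 0..t, ψ (t - τ) * G τ : ℝ) : ℂ) =
      a * v₀ - (∫ τ in 0..t, (ψ (t - τ) : ℂ) * (a * v₀)) +
        ∫ τ in 0..t, (ψ (t - τ) : ℂ) * (a * G τ) := by
  have hsurv : ∫ τ in 0..t, (ψ (t - τ) : ℂ) * (a * v₀) = (∫ r in 0..t, ψ r : ℝ) * (a * v₀) := by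
    rw [intervalIntegral.integral_mul_const, intervalIntegral.integral_ofReal,
      intervalIntegral.integral_comp_sub_left ψ, sub_self, sub_zero]
  have hconv : ∫ τ in 0..t, (ψ (t - τ) : ℂ) * (a * G τ) =
      a * ((∫ τ in 0..t, ψ (t - τ) * G τ : ℝ) : ℂ) := by
    rw [← intervalIntegral.integral_ofReal, ← intervalIntegral.integral_const_mul]
    congr 1
    ext τ
    push_cast
    ring
  rw [hsurv, hconv]
  push_cast
  ring

theorem integrable_fourierLaplace {u : ℝ → ℝ → ℝ} (hmeas : Measurable (Function.uncurry u))
    (hint : IntegrableOn (fun p : ℝ × ℝ => rexp (-(s * p.2)) * |u p.1 p.2|) (univ ×ˢ Ioi 0)) :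
    Integrable (fun p : ℝ × ℝ => ((rexp (-(s * p.2)) : ℝ) : ℂ) *
      Complex.exp (-(Complex.I * ξ * p.1)) * u p.1 p.2) ((volume : Measure ℝ).prod μ₊) := by
  rw [prod_restrict_Ioi, ← Measure.volume_eq_prod]
  refine hint.mono' ((by fun_prop : Measurable fun p : ℝ × ℝ => ((rexp (-(s * p.2)) : ℝ) : ℂ) *
      Complex.exp (-(Complex.I * ξ * p.1))).mul (Complex.measurable_ofReal.comp hmeas)
      ).aestronglyMeasurable (.of_forall fun p => ?_)
  rw [norm_mul, norm_mul, norm_cexp_neg_I_mul, Complex.norm_real, Complex.norm_real,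
    Real.norm_of_nonneg (exp_nonneg _), Real.norm_eq_abs, mul_one]

theorem integrable_and_integral_laplace_timeIndependent (hs : 0 < s) {a : ℝ → ℂ}
    (ha : Integrable a) :
    Integrable (fun p : ℝ × ℝ => ((rexp (-(s * p.2)) : ℝ) : ℂ) * a p.1)
        ((volume : Measure ℝ).prod μ₊) ∧
      ∫ p, ((rexp (-(s * p.2)) : ℝ) : ℂ) * a p.1 ∂((volume : Measure ℝ).prod μ₊) =
        (∫ x, a x) / s := by
  have hE : Integrable (fun t : ℝ => ((rexp (-(s * t)) : ℝ) : ℂ)) μ₊ := by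
    have h := (exp_neg_integrableOn_Ioi 0 hs).ofReal (𝕜 := ℂ)
    simp only [neg_mul] at h
    exact h
  simp_rw [mul_comm _ (a _)]
  refine ⟨ha.mul_prod hE, ?_⟩
  rw [integral_prod_mul (g := fun t => ((rexp (-(s * t)) : ℝ) : ℂ)),
    integral_ofReal_exp_neg_mul_Ioi hs, mul_one_div]

theorem integrable_and_integral_fourierLaplace_conv {φ : ℝ → ℝ} {u : ℝ → ℝ → ℝ} (hφ : Integrable φ)
    (hU : Integrable (fun p : ℝ × ℝ => ((rexp (-(s * p.2)) : ℝ) : ℂ) *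
      Complex.exp (-(Complex.I * ξ * p.1)) * u p.1 p.2) ((volume : Measure ℝ).prod μ₊)) :
    Integrable (fun p : ℝ × ℝ => ((rexp (-(s * p.2)) : ℝ) : ℂ) *
        (Complex.exp (-(Complex.I * ξ * p.1)) * ((∫ y, φ y * u (p.1 - y) p.2 : ℝ) : ℂ)))
        ((volume : Measure ℝ).prod μ₊) ∧
      ∫ p, ((rexp (-(s * p.2)) : ℝ) : ℂ) *
          (Complex.exp (-(Complex.I * ξ * p.1)) * ((∫ y, φ y * u (p.1 - y) p.2 : ℝ) : ℂ))
          ∂((volume : Measure ℝ).prod μ₊) =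
        (∫ y : ℝ, Complex.exp (-(Complex.I * ξ * y)) * φ y) *
          ∫ p, ((rexp (-(s * p.2)) : ℝ) : ℂ) * Complex.exp (-(Complex.I * ξ * p.1)) * u p.1 p.2
            ∂((volume : Measure ℝ).prod μ₊) := by
  have hconv : ∀ p : ℝ × ℝ, Complex.exp (-(Complex.I * ξ * p.1)) *
      ∫ y, (φ y : ℂ) * (((rexp (-(s * p.2)) : ℝ) : ℂ) * u (p.1 - y) p.2) =
      ((rexp (-(s * p.2)) : ℝ) : ℂ) *
        (Complex.exp (-(Complex.I * ξ * p.1)) * ((∫ y, φ y * u (p.1 - y) p.2 : ℝ) : ℂ)) := by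
    intro p
    simp_rw [mul_left_comm (φ _ : ℂ), MeasureTheory.integral_const_mul, ← integral_complex_ofReal]
    push_cast
    ring
  have hV : Integrable (fun p : ℝ × ℝ => Complex.exp (-(Complex.I * ξ * p.1)) *
      (((rexp (-(s * p.2)) : ℝ) : ℂ) * u p.1 p.2)) ((volume : Measure ℝ).prod μ₊) :=
    hU.congr (.of_forall fun p => by ring)
  obtain ⟨hint, hintegral⟩ :=
    integrable_and_integral_mul_conv (φ := fun y => (φ y : ℂ))
      (V := fun x t => ((rexp (-(s * t)) : ℝ) : ℂ) * u x t) cexp_neg_I_mul_add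
      (integrable_cexp_neg_I_mul hφ.ofReal) hV
  simp_rw [hconv] at hint hintegral
  refine ⟨hint, hintegral.trans ?_⟩
  congr 1
  exact integral_congr_ae (.of_forall fun p => by ring)

theorem ae_fourierLaplace_master {ψ φ u₀ : ℝ → ℝ} {u : ℝ → ℝ → ℝ}
    (hmaster : ∀ᵐ p : ℝ × ℝ, 0 ≤ p.2 →
      u p.1 p.2 = (1 - ∫ r in (0 : ℝ)..p.2, ψ r) * u₀ p.1 +
        ∫ τ in (0 : ℝ)..p.2, ψ (p.2 - τ) * ∫ y : ℝ, φ y * u (p.1 - y) τ) :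
    ∀ᵐ p ∂(volume : Measure ℝ).prod μ₊,
      ((rexp (-(s * p.2)) : ℝ) : ℂ) * Complex.exp (-(Complex.I * ξ * p.1)) * u p.1 p.2 =
        ((rexp (-(s * p.2)) : ℝ) : ℂ) * (Complex.exp (-(Complex.I * ξ * p.1)) * u₀ p.1) -
          ((rexp (-(s * p.2)) : ℝ) : ℂ) * (∫ τ in 0..p.2,
            (ψ (p.2 - τ) : ℂ) * (Complex.exp (-(Complex.I * ξ * p.1)) * u₀ p.1)) +
          ((rexp (-(s * p.2)) : ℝ) : ℂ) * ∫ τ in 0..p.2, (ψ (p.2 - τ) : ℂ) *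
            (Complex.exp (-(Complex.I * ξ * p.1)) * ((∫ y, φ y * u (p.1 - y) τ : ℝ) : ℂ)) := by
  rw [prod_restrict_Ioi, ← Measure.volume_eq_prod]
  filter_upwards [ae_restrict_of_ae hmaster,
    ae_restrict_mem (MeasurableSet.univ.prod measurableSet_Ioi)] with p hp hpos
  rw [mul_assoc, hp (le_of_lt hpos.2), ofReal_mul_survival_add_intervalConv]
  ring

end MontrollWeiss

open MontrollWeiss

theorem montroll_weiss_general
    (ψ φ : ℝ → ℝ)
    (hψint : Integrable ψ) (hφint : Integrable φ)
    (u₀ : ℝ → ℝ) (hu₀ : Integrable u₀)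
    (u : ℝ → ℝ → ℝ) (hmeas : Measurable (Function.uncurry u))
    (hint : ∀ s : ℝ, 0 < s →
      IntegrableOn (fun p : ℝ × ℝ => Real.exp (-(s * p.2)) * |u p.1 p.2|)
        (Set.univ ×ˢ Set.Ioi 0))
    (hmaster : ∀ᵐ p : ℝ × ℝ, 0 ≤ p.2 →
      u p.1 p.2 = (1 - ∫ r in (0 : ℝ)..p.2, ψ r) * u₀ p.1 +
        ∫ τ in (0 : ℝ)..p.2, ψ (p.2 - τ) * ∫ y : ℝ, φ y * u (p.1 - y) τ) :
    ∀ s : ℝ, 0 < s → ∀ ξ : ℝ,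
      (∫ t in Set.Ioi (0 : ℝ), ∫ x : ℝ,
          ((Real.exp (-(s * t)) : ℝ) : ℂ) *
            Complex.exp (-(Complex.I * (ξ : ℂ) * (x : ℂ))) * ((u x t : ℝ) : ℂ)) *
        (1 - ((∫ t in Set.Ioi (0 : ℝ), Real.exp (-(s * t)) * ψ t : ℝ) : ℂ) *
          ∫ x : ℝ, Complex.exp (-(Complex.I * (ξ : ℂ) * (x : ℂ))) * ((φ x : ℝ) : ℂ)) =
      (((1 - ∫ t in Set.Ioi (0 : ℝ), Real.exp (-(s * t)) * ψ t) / s : ℝ) : ℂ) *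
        ∫ x : ℝ, Complex.exp (-(Complex.I * (ξ : ℂ) * (x : ℂ))) * ((u₀ x : ℝ) : ℂ) := by
  intro s hs ξ
  have hU := integrable_fourierLaplace (ξ := ξ) hmeas (hint s hs)
  have hψ := integrableOn_exp_neg_mul_Ioi hs.le (f := fun t => (ψ t : ℂ)) hψint.ofReal.integrableOn
  obtain ⟨hv₀, hFv₀⟩ := integrable_and_integral_laplace_timeIndependent hs
    (integrable_cexp_neg_I_mul (ξ := ξ) (f := fun x => (u₀ x : ℂ)) hu₀.ofReal)
  obtain ⟨hg, hFg⟩ := integrable_and_integral_fourierLaplace_conv hφint hU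
  obtain ⟨hP, hFP⟩ := integrable_and_integral_mul_intervalConv
    (G := fun (x : ℝ) _ => Complex.exp (-(Complex.I * ξ * x)) * u₀ x) ofReal_exp_neg_mul_add hψ hv₀
  obtain ⟨hC, hFC⟩ := integrable_and_integral_mul_intervalConv
    (G := fun (x : ℝ) τ => Complex.exp (-(Complex.I * ξ * x)) * ((∫ y, φ y * u (x - y) τ : ℝ) : ℂ))
    ofReal_exp_neg_mul_add hψ hg
  have hUeq := integral_congr_ae (ae_fourierLaplace_master (s := s) (ξ := ξ) hmaster)
  rw [integral_add (hv₀.sub' hP) hC, integral_sub hv₀ hP, hFv₀, hFP, hFC, hFg, hFv₀] at hUeq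
  have hÛ := integral_prod_symm _ hU
  simp only at hÛ
  have hL : ((∫ t in Ioi 0, rexp (-(s * t)) * ψ t : ℝ) : ℂ) =
      ∫ t in Ioi 0, ((rexp (-(s * t)) : ℝ) : ℂ) * ψ t := by
    simp_rw [← integral_complex_ofReal, Complex.ofReal_mul]
  rw [← hÛ, Complex.ofReal_div, Complex.ofReal_sub, Complex.ofReal_one, hL]
  linear_combination hUeq

/-- Montroll–Weiss equation: if `u` satisfies the CTRW master equation with waiting-time
density `ψ` (supported on `[0,∞)`), jump density `φ`, survival probability
`Ψ(t) = 1 − ∫_0^t ψ`, and initial density `u₀`, then its Fourier–Laplace transform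
`Û(ξ,s)` satisfies `Û(ξ,s)(1 − 𝓛[ψ](s) 𝓕[φ](ξ)) = ((1 − 𝓛[ψ](s))/s) 𝓕[u₀](ξ)`. -/
theorem montroll_weiss
    (ψ φ : ℝ → ℝ) (hψ0 : ∀ t, 0 ≤ ψ t) (hφ0 : ∀ x, 0 ≤ φ x)
    (hψint : Integrable ψ) (hφint : Integrable φ)
    (hψ1 : (∫ t : ℝ, ψ t) = 1) (hφ1 : (∫ x : ℝ, φ x) = 1)
    (hψneg : ∀ t : ℝ, t < 0 → ψ t = 0)
    (u₀ : ℝ → ℝ) (hu₀ : Integrable u₀)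
    (u : ℝ → ℝ → ℝ) (hmeas : Measurable (Function.uncurry u))
    (hint : ∀ s : ℝ, 0 < s →
      IntegrableOn (fun p : ℝ × ℝ => Real.exp (-(s * p.2)) * |u p.1 p.2|)
        (Set.univ ×ˢ Set.Ioi 0))
    (hmaster : ∀ᵐ p : ℝ × ℝ, 0 ≤ p.2 →
      u p.1 p.2 = (1 - ∫ r in (0 : ℝ)..p.2, ψ r) * u₀ p.1 +
        ∫ τ in (0 : ℝ)..p.2, ψ (p.2 - τ) * ∫ y : ℝ, φ y * u (p.1 - y) τ) :
    ∀ s : ℝ, 0 < s → ∀ ξ : ℝ,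
      (∫ t in Set.Ioi (0 : ℝ), ∫ x : ℝ,
          ((Real.exp (-(s * t)) : ℝ) : ℂ) *
            Complex.exp (-(Complex.I * (ξ : ℂ) * (x : ℂ))) * ((u x t : ℝ) : ℂ)) *
        (1 - ((∫ t in Set.Ioi (0 : ℝ), Real.exp (-(s * t)) * ψ t : ℝ) : ℂ) *
          ∫ x : ℝ, Complex.exp (-(Complex.I * (ξ : ℂ) * (x : ℂ))) * ((φ x : ℝ) : ℂ)) =
      (((1 - ∫ t in Set.Ioi (0 : ℝ), Real.exp (-(s * t)) * ψ t) / s : ℝ) : ℂ) *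
        ∫ x : ℝ, Complex.exp (-(Complex.I * (ξ : ℂ) * (x : ℂ))) * ((u₀ x : ℝ) : ℂ) :=
  montroll_weiss_general ψ φ hψint hφint u₀ hu₀ u hmeas hint hmaster
end
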